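/- arXiv:2605.24939 — 5 statements merged into one kernel-verified Lean document; each statement's English description precedes it below -/
import Mathlib

section
/- Let μ be a probability measure on A, W > 0, and let f, g be probability densities with respect to μ bounded above by 1/W and strictly positive μ-a.e. Suppose log f − log g = ⟨v, h(·)⟩ + c μ-a.e. for some vector v ∈ ℝᵖ, measurable h : A → ℝᵖ with ‖h(a)‖₂ ≤ 1 for all a, and constant c ∈ ℝ. Then KL(f·μ | g·μ) ≤ ‖v‖₂²/(2W). -/
open MeasureTheory Real Set
open scoped RealInnerProductSpace

/-!
Write `φ = log f - log g`. The `W`-strong convexity of `t ↦ t log t` on `(0, 1/W]` gives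
`g φ = -g log (g / f) ≤ (f - g) - (W/2) (f - g)²`, and `(f - g) φ = (f - g) (⟪v, h⟫ + c)` is at most
`‖v‖ |f - g| + c (f - g)`. Adding the two and using `‖v‖ y - (W/2) y² ≤ ‖v‖² / (2W)`, the integrand
`f φ` is bounded pointwise by `‖v‖² / (2W) + (1 + c) (f - g)`, whose integral is `‖v‖² / (2W)`
because `f` and `g` are probability densities.
-/

theorem ConvexOn.add_mul_sub_le_of_hasDerivAt {S : Set ℝ} {f : ℝ → ℝ} {f' x y : ℝ}
    (hf : ConvexOn ℝ S f) (hx : x ∈ S) (hy : y ∈ S) (hfy : HasDerivAt f f' y) :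
    f y + f' * (x - y) ≤ f x := by
  rcases lt_trichotomy x y with hxy | rfl | hyx
  · have := hf.slope_le_of_hasDerivAt hx hy hxy hfy
    rw [slope_def_field, div_le_iff₀ (sub_pos.2 hxy)] at this
    linarith
  · simp
  · have := hf.le_slope_of_hasDerivAt hy hx hyx hfy
    rw [slope_def_field, le_div_iff₀ (sub_pos.2 hyx)] at this
    linarith

theorem hasDerivAt_mul_log_sub_sq (W : ℝ) {t : ℝ} (ht : t ≠ 0) :
    HasDerivAt (fun t ↦ t * log t - W / 2 * t ^ 2) (log t + 1 - W * t) t := by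
  refine ((hasDerivAt_mul_log ht).sub ((hasDerivAt_pow 2 t).const_mul (W / 2))).congr_deriv ?_
  norm_num
  ring

theorem convexOn_mul_log_sub_sq {W : ℝ} (hW : 0 < W) :
    ConvexOn ℝ (Ioc 0 W⁻¹) fun t ↦ t * log t - W / 2 * t ^ 2 := by
  refine convexOn_of_hasDerivWithinAt2_nonneg (convex_Ioc 0 W⁻¹)
    (f' := fun t ↦ log t + 1 - W * t) (f'' := fun t ↦ t⁻¹ - W) ?_ ?_ ?_ ?_
  · exact (continuousOn_id.mul (continuousOn_log.mono fun t ht ↦ ht.1.ne')).sub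
      (continuousOn_const.mul (continuousOn_pow 2))
  all_goals intro t ht; rw [interior_Ioc] at ht
  · exact (hasDerivAt_mul_log_sub_sq W ht.1.ne').hasDerivWithinAt
  · exact ((((hasDerivAt_log ht.1.ne').add_const 1).sub
      ((hasDerivAt_id' t).const_mul W)).congr_deriv (by ring)).hasDerivWithinAt
  · exact sub_nonneg.2 ((le_inv_comm₀ ht.1 hW).1 ht.2.le)

theorem sub_add_mul_sq_le_mul_log_div {W x y : ℝ} (hW : 0 < W) (hx : x ∈ Ioc 0 W⁻¹)
    (hy : y ∈ Ioc 0 W⁻¹) :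
    x - y + W / 2 * (x - y) ^ 2 ≤ x * log (x / y) := by
  have := (convexOn_mul_log_sub_sq hW).add_mul_sub_le_of_hasDerivAt hx hy
    (hasDerivAt_mul_log_sub_sq W hy.1.ne')
  rw [log_div hx.1.ne' hy.1.ne']
  linarith

theorem mul_log_div_le_of_log_sub_log_eq {W V c s x y : ℝ} (hW : 0 < W) (hx : x ∈ Ioc 0 W⁻¹)
    (hy : y ∈ Ioc 0 W⁻¹) (hs : |s| ≤ V) (hlog : log x - log y = s + c) :
    x * log (x / y) ≤ V ^ 2 / (2 * W) + (1 + c) * (x - y) := by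
  have hbreg := sub_add_mul_sq_le_mul_log_div hW hy hx
  rw [log_div hy.1.ne' hx.1.ne', ← neg_sub (log x) (log y), hlog] at hbreg
  rw [log_div hx.1.ne' hy.1.ne', hlog]
  have hcs : (x - y) * s ≤ V * |x - y| := by
    calc (x - y) * s ≤ |x - y| * |s| := by rw [← abs_mul]; exact le_abs_self _
    _ ≤ |x - y| * V := by gcongr
    _ = V * |x - y| := mul_comm _ _
  have hamgm : V * |x - y| - W / 2 * |x - y| ^ 2 ≤ V ^ 2 / (2 * W) := by
    rw [le_div_iff₀ (by positivity)]
    nlinarith [sq_nonneg (V - W * |x - y|)]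
  rw [sq_abs] at hamgm
  linarith

theorem kl_logit_bound_general {A : Type*} [MeasurableSpace A] (μ : Measure A)
    [IsProbabilityMeasure μ] (W : ℝ) (hW : 0 < W) {p : ℕ}
    (f g : A → ℝ)
    (hfd : ∫ a, f a ∂μ = 1) (hgd : ∫ a, g a ∂μ = 1)
    (hfb : ∀ᵐ a ∂μ, 0 < f a ∧ f a ≤ 1 / W) (hgb : ∀ᵐ a ∂μ, 0 < g a ∧ g a ≤ 1 / W)
    (v : EuclideanSpace ℝ (Fin p)) (h : A → EuclideanSpace ℝ (Fin p)) (c : ℝ)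
    (hh : ∀ a, ‖h a‖ ≤ 1)
    (hlog : ∀ᵐ a ∂μ, Real.log (f a) - Real.log (g a) = ⟪v, h a⟫ + c) :
    ∫ a, f a * Real.log (f a / g a) ∂μ ≤ ‖v‖ ^ 2 / (2 * W) := by
  have hf : Integrable f μ := .of_integral_ne_zero (by simp [hfd])
  have hg : Integrable g μ := .of_integral_ne_zero (by simp [hgd])
  have hpointwise : ∀ᵐ a ∂μ,
      f a * log (f a / g a) ≤ ‖v‖ ^ 2 / (2 * W) + (1 + c) * (f a - g a) := by
    filter_upwards [hfb, hgb, hlog] with a hfa hga hloga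
    have hinner : |⟪v, h a⟫| ≤ ‖v‖ :=
      (abs_real_inner_le_norm v (h a)).trans (mul_le_of_le_one_right (norm_nonneg v) (hh a))
    exact mul_log_div_le_of_log_sub_log_eq hW (by simpa using hfa) (by simpa using hga) hinner
      hloga
  have hfg : Integrable (fun a ↦ (1 + c) * (f a - g a)) μ := (hf.sub hg).const_mul _
  by_cases hint : Integrable (fun a ↦ f a * log (f a / g a)) μ
  · calc ∫ a, f a * log (f a / g a) ∂μ
        ≤ ∫ a, (‖v‖ ^ 2 / (2 * W) + (1 + c) * (f a - g a)) ∂μ :=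
          integral_mono_ae hint ((integrable_const _).add hfg) hpointwise
      _ = ‖v‖ ^ 2 / (2 * W) := by
          rw [integral_add (integrable_const _) hfg, integral_const_mul,
            integral_sub hf hg, hfd, hgd]
          simp
  · rw [integral_undef hint]
    positivity

/-- KL-logit inequality: if two bounded densities have log-ratio of log-linear form
`⟨v, h(·)⟩ + c` with `‖h‖ ≤ 1`, then `KL(f·μ | g·μ) ≤ ‖v‖² / (2W)`. -/
theorem kl_logit_bound {A : Type*} [MeasurableSpace A] (μ : Measure A)
    [IsProbabilityMeasure μ] (W : ℝ) (hW : 0 < W) {p : ℕ}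
    (f g : A → ℝ) (hf : Measurable f) (hg : Measurable g)
    (hfd : ∫ a, f a ∂μ = 1) (hgd : ∫ a, g a ∂μ = 1)
    (hfb : ∀ᵐ a ∂μ, 0 < f a ∧ f a ≤ 1 / W) (hgb : ∀ᵐ a ∂μ, 0 < g a ∧ g a ≤ 1 / W)
    (v : EuclideanSpace ℝ (Fin p)) (h : A → EuclideanSpace ℝ (Fin p)) (c : ℝ)
    (hh : ∀ a, ‖h a‖ ≤ 1)
    (hlog : ∀ᵐ a ∂μ, Real.log (f a) - Real.log (g a) = ⟪v, h a⟫ + c) :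
    ∫ a, f a * Real.log (f a / g a) ∂μ ≤ ‖v‖ ^ 2 / (2 * W) :=
  kl_logit_bound_general μ W hW f g hfd hgd hfb hgb v h c hh hlog
end

section
/- Let A be a compact metric space, μ a probability measure with full support on A, and φ : A → ℝ continuous with maximizer set Argmax(φ) satisfying μ(Argmax(φ)) = 0. Then the Gibbs measures π_r(da) ∝ e^{r·φ(a)} μ(da) satisfy KL(π_r | μ) → ∞ as r → ∞. -/
/-!
Write `f_r = e^{rφ}/Z_r` for the Gibbs density and `S_ε = {φ > max φ - ε}`. Comparing `f_r`
with the density equal to `μ(S_ε)⁻¹` on `S_ε` and to `1` off it, Gibbs' inequality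
`x log x ≥ x log t + x - t` gives `KL(π_r | μ) ≥ π_r(S_ε) · log (1 / μ(S_ε)) - 1`.
For fixed `ε`, `π_r(S_ε) → 1` because `π_r(S_εᶜ) ≤ e^{-rε/2} / μ(S_{ε/2})`, and
`μ(S_{ε/2}) > 0` by full support. As `ε ↓ 0`, `μ(S_ε) ↓ μ(Argmax φ) = 0`, so the bound can be
made arbitrarily large.
-/

open MeasureTheory Filter Topology Set

theorem Real.mul_log_add_sub_le_mul_log {x t : ℝ} (hx : 0 ≤ x) (ht : 0 < t) :
    x * Real.log t + x - t ≤ x * Real.log x := by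
  rcases hx.eq_or_lt with rfl | hx
  · simpa using ht.le
  have h := Real.log_le_sub_one_of_pos (div_pos ht hx)
  rw [Real.log_div ht.ne' hx.ne', le_sub_iff_add_le, ← mul_le_mul_iff_of_pos_left hx] at h
  rw [mul_add, mul_sub, mul_div_cancel₀ _ hx.ne'] at h
  linarith

section

variable {A : Type*} [MeasurableSpace A]

noncomputable def gibbsDensity (μ : Measure A) (φ : A → ℝ) (r : ℝ) (a : A) : ℝ :=
  Real.exp (r * φ a) / ∫ b, Real.exp (r * φ b) ∂μ

theorem setIntegral_mul_neg_log_sub_one_le_integral_mul_log {μ : Measure A}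
    [IsProbabilityMeasure μ] {f : A → ℝ} (hf₀ : ∀ a, 0 ≤ f a) (hf : Integrable f μ)
    (hflog : Integrable (fun a => f a * Real.log (f a)) μ) (hf₁ : ∫ a, f a ∂μ = 1)
    {S : Set A} (hS : MeasurableSet S) (hμS : 0 < μ.real S) :
    (∫ a in S, f a ∂μ) * -Real.log (μ.real S) - 1 ≤ ∫ a, f a * Real.log (f a) ∂μ := by
  set m := μ.real S
  have hpt : ∀ a, S.indicator (fun a => f a * -Real.log m - m⁻¹) a + (f a - 1)
      ≤ f a * Real.log (f a) := by
    intro a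
    by_cases ha : a ∈ S
    · have := Real.mul_log_add_sub_le_mul_log (hf₀ a) (inv_pos.2 hμS)
      rw [Real.log_inv] at this
      simp only [indicator_of_mem ha]
      linarith
    · have := Real.mul_log_add_sub_le_mul_log (hf₀ a) one_pos
      rw [Real.log_one, mul_zero] at this
      simp only [indicator_of_notMem ha]
      linarith
  have hind : Integrable (S.indicator fun a => f a * -Real.log m - m⁻¹) μ :=
    ((hf.mul_const _).sub (integrable_const _)).indicator hS
  have hsub : Integrable (fun a => f a - 1) μ := hf.sub (integrable_const _)
  calc (∫ a in S, f a ∂μ) * -Real.log m - 1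
      = ∫ a, S.indicator (fun a => f a * -Real.log m - m⁻¹) a + (f a - 1) ∂μ := by
        rw [integral_add hind hsub, integral_indicator hS,
          integral_sub (hf.integrableOn.mul_const _) (integrable_const _), integral_mul_const,
          integral_sub hf (integrable_const _), hf₁, setIntegral_const, integral_const]
        simp only [smul_eq_mul, probReal_univ]
        field_simp
        ring
    _ ≤ ∫ a, f a * Real.log (f a) ∂μ :=
        integral_mono (hind.add hsub) hflog hpt

theorem gibbsDensity_nonneg (μ : Measure A) (φ : A → ℝ) (r : ℝ) (a : A) :
    0 ≤ gibbsDensity μ φ r a :=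
  div_nonneg (Real.exp_pos _).le (integral_nonneg fun _ => (Real.exp_pos _).le)

theorem integral_gibbsDensity {μ : Measure A} [NeZero μ] {φ : A → ℝ} {r : ℝ}
    (hint : Integrable (fun a => Real.exp (r * φ a)) μ) :
    ∫ a, gibbsDensity μ φ r a ∂μ = 1 :=
  (integral_div _ _).trans (div_self (integral_exp_pos hint).ne')

theorem setIntegral_gibbsDensity_le {μ : Measure A} [IsFiniteMeasure μ] {φ : A → ℝ} {r : ℝ}
    (hr : 0 ≤ r) (hint : Integrable (fun a => Real.exp (r * φ a)) μ) {s t : Set A}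
    (hs : MeasurableSet s) (ht : MeasurableSet t) (hμt : 0 < μ.real t) {c c' : ℝ}
    (hsc : ∀ a ∈ s, φ a ≤ c) (htc : ∀ a ∈ t, c' ≤ φ a) :
    ∫ a in s, gibbsDensity μ φ r a ∂μ ≤ μ.real s / μ.real t * Real.exp (-(r * (c' - c))) := by
  have hnum : ∫ a in s, Real.exp (r * φ a) ∂μ ≤ μ.real s * Real.exp (r * c) := by
    rw [← smul_eq_mul, ← setIntegral_const]
    exact setIntegral_mono_on hint.integrableOn (integrableOn_const (measure_ne_top _ _)) hs
      fun a ha => Real.exp_le_exp.2 (mul_le_mul_of_nonneg_left (hsc a ha) hr)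
  have hden : μ.real t * Real.exp (r * c') ≤ ∫ b, Real.exp (r * φ b) ∂μ := calc
    _ ≤ ∫ b in t, Real.exp (r * φ b) ∂μ := by
      rw [mul_comm]
      exact setIntegral_ge_of_const_le_real ht (measure_ne_top _ _)
        (fun a ha => Real.exp_le_exp.2 (mul_le_mul_of_nonneg_left (htc a ha) hr)) hint.integrableOn
    _ ≤ _ := setIntegral_le_integral hint (.of_forall fun _ => (Real.exp_pos _).le)
  calc ∫ a in s, gibbsDensity μ φ r a ∂μ
      = (∫ a in s, Real.exp (r * φ a) ∂μ) / ∫ b, Real.exp (r * φ b) ∂μ := integral_div _ _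
    _ ≤ μ.real s * Real.exp (r * c) / (μ.real t * Real.exp (r * c')) :=
      div_le_div₀ (by positivity) hnum (by positivity) hden
    _ = _ := by
      rw [show -(r * (c' - c)) = r * c - r * c' by ring, Real.exp_sub]
      field_simp

theorem tendsto_measure_setOf_sub_lt_nhdsGT (μ : Measure A) [IsFiniteMeasure μ] {φ : A → ℝ}
    (hφ : Measurable φ) (M : ℝ) :
    Tendsto (fun ε => μ {a | M - ε < φ a}) (𝓝[>] 0) (𝓝 (μ {a | M ≤ φ a})) := by
  have hinter : ⋂ ε > (0 : ℝ), {a | M - ε < φ a} = {a | M ≤ φ a} := by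
    ext a
    simp only [mem_iInter, mem_ofPred_eq, sub_lt_iff_lt_add, gt_iff_lt]
    exact le_iff_forall_pos_lt_add.symm
  rw [← hinter]
  refine tendsto_measure_biInter_gt
    (fun ε _ => (measurableSet_lt measurable_const hφ).nullMeasurableSet) (fun i j _ hij a ha => ?_)
    ⟨1, one_pos, measure_ne_top _ _⟩
  simp only [mem_ofPred_eq] at ha ⊢
  linarith

variable [TopologicalSpace A]

theorem measureReal_setOf_sub_lt_pos (μ : Measure A) [IsFiniteMeasure μ] [μ.IsOpenPosMeasure]
    {φ : A → ℝ} (hφ : Continuous φ) (a₀ : A) {ε : ℝ} (hε : 0 < ε) :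
    0 < μ.real {a | φ a₀ - ε < φ a} :=
  ENNReal.toReal_pos ((isOpen_lt continuous_const hφ).measure_pos μ ⟨a₀, by simpa⟩).ne'
    (measure_ne_top _ _)

variable [OpensMeasurableSpace A] [CompactSpace A]

theorem integrable_exp_mul_of_continuous (μ : Measure A) [IsFiniteMeasure μ] {φ : A → ℝ}
    (hφ : Continuous φ) (r : ℝ) : Integrable (fun a => Real.exp (r * φ a)) μ :=
  (continuous_const.mul hφ).rexp.integrable_of_hasCompactSupport (.of_compactSpace _)

theorem tendsto_setIntegral_gibbsDensity_setOf_sub_lt (μ : Measure A)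
    [IsProbabilityMeasure μ] [μ.IsOpenPosMeasure] {φ : A → ℝ} (hφ : Continuous φ) (a₀ : A)
    {ε : ℝ} (hε : 0 < ε) :
    Tendsto (fun r => ∫ a in {a | φ a₀ - ε < φ a}, gibbsDensity μ φ r a ∂μ) atTop (𝓝 1) := by
  set S := {a | φ a₀ - ε < φ a}
  have hS : MeasurableSet S := measurableSet_lt measurable_const hφ.measurable
  have hint := integrable_exp_mul_of_continuous μ hφ
  have hp := measureReal_setOf_sub_lt_pos μ hφ a₀ (half_pos hε)
  have hcompl : Tendsto (fun r => ∫ a in Sᶜ, gibbsDensity μ φ r a ∂μ) atTop (𝓝 0) := by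
    have hlim : Tendsto (fun r => μ.real Sᶜ / μ.real {a | φ a₀ - ε / 2 < φ a} *
        Real.exp (-(r * (ε / 2)))) atTop (𝓝 0) := by
      simpa using (Real.tendsto_exp_neg_atTop_nhds_zero.comp
        (tendsto_id.atTop_mul_const (half_pos hε))).const_mul _
    refine tendsto_of_tendsto_of_tendsto_of_le_of_le' tendsto_const_nhds hlim
      (.of_forall fun r => setIntegral_nonneg hS.compl fun a _ => gibbsDensity_nonneg μ φ r a) ?_
    filter_upwards [eventually_ge_atTop 0] with r hr
    refine (setIntegral_gibbsDensity_le hr (hint r) hS.compl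
      (measurableSet_lt measurable_const hφ.measurable) hp (fun a ha => by simpa [S] using ha)
      (fun a ha => ha.le)).trans_eq ?_
    rw [show φ a₀ - ε / 2 - (φ a₀ - ε) = ε / 2 by ring]
  have h := (tendsto_const_nhds (x := (1 : ℝ))).sub hcompl
  rw [sub_zero] at h
  refine h.congr fun r => ?_
  rw [← integral_gibbsDensity (hint r),
    ← integral_add_compl (f := gibbsDensity μ φ r) hS ((hint r).div_const _),
    add_sub_cancel_right]

end

/-- If the maximizer set of a continuous `φ` has `μ`-measure zero (with `μ` a fully
supported probability measure on a compact metric space), then the KL divergence of the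
Gibbs measures `π_r ∝ e^{rφ} μ` from `μ` tends to infinity as `r → ∞`. -/
theorem gibbs_kl_tendsto_atTop {A : Type*} [MeasurableSpace A] [MetricSpace A]
    [CompactSpace A] [BorelSpace A] (μ : Measure A) [IsProbabilityMeasure μ]
    [μ.IsOpenPosMeasure] (φ : A → ℝ) (hφ : Continuous φ)
    (hmax : μ {a | ∀ b, φ b ≤ φ a} = 0) :
    Tendsto
      (fun r : ℝ => ∫ a, (Real.exp (r * φ a) / ∫ b, Real.exp (r * φ b) ∂μ) *
          Real.log (Real.exp (r * φ a) / ∫ b, Real.exp (r * φ b) ∂μ) ∂μ)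
      atTop atTop := by
  show Tendsto (fun r => ∫ a, gibbsDensity μ φ r a * Real.log (gibbsDensity μ φ r a) ∂μ)
    atTop atTop
  have := nonempty_of_isProbabilityMeasure μ
  obtain ⟨a₀, -, ha₀⟩ := isCompact_univ.exists_isMaxOn univ_nonempty hφ.continuousOn
  have hArgmax : {a | φ a₀ ≤ φ a} = {a | ∀ b, φ b ≤ φ a} :=
    ext fun a => ⟨fun h b => (ha₀ (mem_univ b)).trans h, fun h => h a₀⟩
  have hlog : Tendsto (fun ε => -Real.log (μ.real {a | φ a₀ - ε < φ a})) (𝓝[>] 0) atTop := by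
    have h := tendsto_measure_setOf_sub_lt_nhdsGT μ hφ.measurable (φ a₀)
    rw [hArgmax, hmax] at h
    refine tendsto_neg_atBot_atTop.comp (Real.tendsto_log_nhdsGT_zero.comp
      (tendsto_nhdsWithin_iff.2 ⟨?_, ?_⟩))
    · exact (ENNReal.tendsto_toReal ENNReal.zero_ne_top).comp h
    · filter_upwards [self_mem_nhdsWithin] with ε hε
      exact measureReal_setOf_sub_lt_pos μ hφ a₀ hε
  have hint := integrable_exp_mul_of_continuous μ hφ
  have hcont (r : ℝ) : Continuous (gibbsDensity μ φ r) :=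
    (continuous_const.mul hφ).rexp.div_const _
  refine tendsto_atTop.2 fun K => ?_
  obtain ⟨ε, hKε, hε⟩ := ((hlog.eventually_ge_atTop (2 * |K| + 2)).and self_mem_nhdsWithin).exists
  filter_upwards [(tendsto_setIntegral_gibbsDensity_setOf_sub_lt μ hφ a₀ hε).eventually
    (eventually_ge_nhds one_half_lt_one)] with r hr
  have hKL := setIntegral_mul_neg_log_sub_one_le_integral_mul_log (gibbsDensity_nonneg μ φ r)
    ((hint r).div_const _)
    ((Real.continuous_mul_log.comp (hcont r)).integrable_of_hasCompactSupport (.of_compactSpace _))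
    (integral_gibbsDensity (hint r)) (measurableSet_lt measurable_const hφ.measurable)
    (measureReal_setOf_sub_lt_pos μ hφ a₀ hε)
  nlinarith [le_abs_self K, abs_nonneg K]
end

section
/- Let B be a real symmetric p×p matrix and x ∈ ℝᵖ, and set M = B + x·xᵀ. If the eigenvalues of M are η₁ ≥ ... ≥ η_p and those of B are λ₁ ≥ ... ≥ λ_p, then they interlace: η₁ ≥ λ₁ ≥ η₂ ≥ λ₂ ≥ ... ≥ η_p ≥ λ_p. -/
/-!
Both inequalities are instances of one comparison principle: if `⟪w, A w⟫ ≤ ⟪w, A' w⟫` on a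
subspace `K` of an `n`-dimensional space, then the `j`-th largest eigenvalue of `A` is at most the
`i`-th largest eigenvalue of `A'` as soon as `n + i ≤ j + dim K`. Indeed, the span of the top
`j + 1` eigenvectors of `A`, the span of the bottom `n - i` eigenvectors of `A'` and `K` then
share a nonzero vector `w`, whose Rayleigh quotients squeeze `αⱼ ≤ ⟪w, A w⟫ / ‖w‖² ≤
⟪w, A' w⟫ / ‖w‖² ≤ α'ᵢ`. As `M - B = x xᵀ` is positive semidefinite, `K = ℝᵖ` gives `λᵢ ≤ ηᵢ`;
as `M` and `B` agree on `x^⊥`, `K = x^⊥` with the roles of `M` and `B` swapped gives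
`ηᵢ₊₁ ≤ λᵢ`.
-/

open scoped Matrix RealInnerProductSpace
open Module Submodule Finset

section

variable {K V : Type*} [DivisionRing K] [AddCommGroup V] [Module K V] [FiniteDimensional K V]

theorem Submodule.finrank_add_finrank_le_finrank_inf_add (S T : Submodule K V) :
    finrank K S + finrank K T ≤ finrank K ↥(S ⊓ T) + finrank K V := by
  have := Submodule.finrank_sup_add_finrank_inf_eq S T
  have := (S ⊔ T).finrank_le
  omega

end

theorem Submodule.finrank_le_finrank_orthogonal_span_singleton_add_one {𝕜 E : Type*} [RCLike 𝕜]
    [NormedAddCommGroup E] [InnerProductSpace 𝕜 E] [FiniteDimensional 𝕜 E] (v : E) :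
    finrank 𝕜 E ≤ finrank 𝕜 ↥(𝕜 ∙ v)ᗮ + 1 := by
  have := (𝕜 ∙ v).finrank_add_finrank_orthogonal
  have : finrank 𝕜 ↥(𝕜 ∙ v) ≤ 1 := by
    simpa using finrank_span_le_card (R := 𝕜) ({v} : Set E)
  omega

variable {ι E : Type*} [Fintype ι] [NormedAddCommGroup E] [InnerProductSpace ℝ E]

namespace OrthonormalBasis

variable (b : OrthonormalBasis ι ℝ E)

theorem inner_eq_zero_of_mem_span_image {s : Set ι} {i : ι} (hi : i ∉ s) {w : E}
    (hw : w ∈ span ℝ (b '' s)) : ⟪b i, w⟫ = 0 := by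
  refine mem_orthogonal_singleton_iff_inner_right.1 (span_le.2 ?_ hw)
  rintro _ ⟨k, hk, rfl⟩
  exact mem_orthogonal_singleton_iff_inner_right.2
    (b.orthonormal.2 (ne_of_mem_of_not_mem hk hi).symm)

theorem finrank_span_image (s : Finset ι) : finrank ℝ ↥(span ℝ (b '' s)) = #s := by
  rw [Set.image_eq_range]
  exact (finrank_span_eq_card (b.orthonormal.linearIndependent.comp _ Subtype.val_injective)).trans
    (by simp)

variable {b} {T : E →ₗ[ℝ] E} {μ : ι → ℝ}

theorem inner_map_self_eq_sum (hT : ∀ i, T (b i) = μ i • b i) (w : E) :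
    ⟪w, T w⟫ = ∑ i, μ i * ⟪b i, w⟫ ^ 2 := by
  calc ⟪w, T w⟫ = ⟪w, ∑ i, (μ i * ⟪b i, w⟫) • b i⟫ := by
        congr 1
        conv_lhs => rw [← b.sum_repr' w]
        simp only [map_sum, map_smul, hT, smul_smul, mul_comm]
    _ = ∑ i, μ i * ⟪b i, w⟫ ^ 2 := by
        simp only [inner_sum, real_inner_smul_right, real_inner_comm w, sq, mul_assoc]

theorem inner_map_self_le_of_mem_span (hT : ∀ i, T (b i) = μ i • b i) {s : Set ι} {c : ℝ}
    (hc : ∀ i ∈ s, μ i ≤ c) {w : E} (hw : w ∈ span ℝ (b '' s)) : ⟪w, T w⟫ ≤ c * ‖w‖ ^ 2 := by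
  rw [inner_map_self_eq_sum hT, ← b.sum_sq_inner_right, Finset.mul_sum]
  refine Finset.sum_le_sum fun i _ ↦ ?_
  by_cases hi : i ∈ s
  · exact mul_le_mul_of_nonneg_right (hc i hi) (sq_nonneg _)
  · simp [b.inner_eq_zero_of_mem_span_image hi hw]

theorem le_inner_map_self_of_mem_span (hT : ∀ i, T (b i) = μ i • b i) {s : Set ι} {c : ℝ}
    (hc : ∀ i ∈ s, c ≤ μ i) {w : E} (hw : w ∈ span ℝ (b '' s)) : c * ‖w‖ ^ 2 ≤ ⟪w, T w⟫ := by
  simpa using inner_map_self_le_of_mem_span (T := -T) (μ := -μ) (c := -c) (by simp [hT])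
    (fun i hi ↦ neg_le_neg (hc i hi)) hw

end OrthonormalBasis

theorem eigenvalue_le_of_inner_map_self_le_on {n : ℕ} {A A' : E →ₗ[ℝ] E}
    {a a' : OrthonormalBasis (Fin n) ℝ E} {α α' : Fin n → ℝ}
    (ha : ∀ k, A (a k) = α k • a k) (ha' : ∀ k, A' (a' k) = α' k • a' k)
    (hα : Antitone α) (hα' : Antitone α') (K : Submodule ℝ E)
    (hK : ∀ w ∈ K, ⟪w, A w⟫ ≤ ⟪w, A' w⟫) {i j : Fin n} (hij : n + i ≤ j + finrank ℝ K) :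
    α j ≤ α' i := by
  have : FiniteDimensional ℝ E := a.toBasis.finiteDimensional_of_finite
  have hE : finrank ℝ E = n := by simp [finrank_eq_card_basis a.toBasis]
  set S := span ℝ (a '' ↑(Iic j))
  set T := span ℝ (a' '' ↑(Ici i))
  have hS : finrank ℝ S = j + 1 := by rw [a.finrank_span_image, Fin.card_Iic]
  have hT : finrank ℝ T = n - i := by rw [a'.finrank_span_image, Fin.card_Ici]
  obtain ⟨w, ⟨⟨hwS, hwT⟩, hwK⟩, hw0⟩ : ∃ w ∈ S ⊓ T ⊓ K, w ≠ 0 := by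
    refine exists_mem_ne_zero_of_ne_bot (one_le_finrank_iff.1 ?_)
    have := S.finrank_add_finrank_le_finrank_inf_add T
    have := (S ⊓ T).finrank_add_finrank_le_finrank_inf_add K
    omega
  refine le_of_mul_le_mul_right ?_ (by positivity : 0 < ‖w‖ ^ 2)
  calc α j * ‖w‖ ^ 2 ≤ ⟪w, A w⟫ :=
        OrthonormalBasis.le_inner_map_self_of_mem_span ha (fun k hk ↦ hα (mem_Iic.1 hk)) hwS
    _ ≤ ⟪w, A' w⟫ := hK w hwK
    _ ≤ α' i * ‖w‖ ^ 2 :=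
        OrthonormalBasis.inner_map_self_le_of_mem_span ha' (fun k hk ↦ hα' (mem_Ici.1 hk)) hwT

namespace Matrix

variable {n : Type*} [Fintype n] [DecidableEq n]

theorem IsHermitian.toEuclideanLin_eigenvectorBasis {A : Matrix n n ℝ} (hA : A.IsHermitian)
    (j : n) : toEuclideanLin A (hA.eigenvectorBasis j) = hA.eigenvalues j • hA.eigenvectorBasis j :=
  WithLp.ofLp_injective 2 (hA.mulVec_eigenvectorBasis j)

theorem toEuclideanLin_vecMulVec (x y : n → ℝ) (w : EuclideanSpace ℝ n) :
    toEuclideanLin (vecMulVec x y) w = ⟪WithLp.toLp 2 y, w⟫ • WithLp.toLp 2 x := by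
  ext k
  simp [toLpLin_apply, vecMulVec_mulVec, PiLp.inner_apply, dotProduct, mul_comm]

theorem inner_toEuclideanLin_add_vecMulVec_self (B : Matrix n n ℝ) (x : n → ℝ)
    (w : EuclideanSpace ℝ n) :
    ⟪w, toEuclideanLin (B + vecMulVec x x) w⟫ =
      ⟪w, toEuclideanLin B w⟫ + ⟪WithLp.toLp 2 x, w⟫ ^ 2 := by
  rw [map_add, LinearMap.add_apply, inner_add_right, toEuclideanLin_vecMulVec,
    real_inner_smul_right, real_inner_comm w, sq]

end Matrix

/-- Rank-one eigenvalue interlacing: if `M = B + x xᵀ` with `B` real symmetric and the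
eigenvalues of `M` and `B` are enumerated in decreasing order as `η` and `lam`, then
`η₁ ≥ λ₁ ≥ η₂ ≥ λ₂ ≥ ⋯ ≥ η_p ≥ λ_p`. -/
theorem rank_one_interlacing {p : ℕ} (B : Matrix (Fin p) (Fin p) ℝ) (hB : B.IsHermitian)
    (x : Fin p → ℝ) (M : Matrix (Fin p) (Fin p) ℝ) (hMdef : M = B + Matrix.vecMulVec x x)
    (hM : M.IsHermitian) (η lam : Fin p → ℝ) (hηmono : Antitone η) (hlmono : Antitone lam)
    (ση σl : Equiv.Perm (Fin p))
    (hη : ∀ i, η i = hM.eigenvalues (ση i)) (hl : ∀ i, lam i = hB.eigenvalues (σl i)) :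
    (∀ i, lam i ≤ η i) ∧ ∀ i : Fin p, ∀ h : (i : ℕ) + 1 < p, η ⟨(i : ℕ) + 1, h⟩ ≤ lam i := by
  have hbM (k : Fin p) : Matrix.toEuclideanLin M (hM.eigenvectorBasis.reindex ση.symm k) =
      η k • hM.eigenvectorBasis.reindex ση.symm k := by
    simpa [hη] using hM.toEuclideanLin_eigenvectorBasis (ση k)
  have hbB (k : Fin p) : Matrix.toEuclideanLin B (hB.eigenvectorBasis.reindex σl.symm k) =
      lam k • hB.eigenvectorBasis.reindex σl.symm k := by
    simpa [hl] using hB.toEuclideanLin_eigenvectorBasis (σl k)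
  have hquad := hMdef ▸ Matrix.inner_toEuclideanLin_add_vecMulVec_self B x
  set v : EuclideanSpace ℝ (Fin p) := WithLp.toLp 2 x
  refine ⟨fun i ↦ ?_, fun i h ↦ ?_⟩
  · refine eigenvalue_le_of_inner_map_self_le_on hbB hbM hlmono hηmono ⊤
      (fun w _ ↦ by rw [hquad]; exact le_add_of_nonneg_right (sq_nonneg _)) ?_
    simp [add_comm]
  · refine eigenvalue_le_of_inner_map_self_le_on hbM hbB hηmono hlmono (ℝ ∙ v)ᗮ
      (fun w hw ↦ by rw [hquad, mem_orthogonal_singleton_iff_inner_right.1 hw]; simp) ?_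
    have := finrank_le_finrank_orthogonal_span_singleton_add_one (𝕜 := ℝ) v
    simp only [finrank_euclideanSpace_fin] at this ⊢
    omega
end

section
/- Let μ be a probability measure on A, π_θ ∝ exp(⟨θ, g⟩)μ with sup_a ‖g(a)‖₂ ≤ 1, and θ' ∈ ℝᵖ. Suppose π is a probability measure with density dπ/dμ satisfying e^{−R} ≤ dπ/dμ(a) for all a, for some R > 0. Then π = q·π_{θ'} + (1 − q)·π̄ for q = e^{−R − 2‖θ'‖₂} ∈ (0, 1] and some probability measure π̄, and consequently for every unit vector v: Var_{π}(⟨v, g⟩) ≥ q·Var_{π_{θ'}}(⟨v, g⟩). -/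
open MeasureTheory ProbabilityTheory
open scoped RealInnerProductSpace ENNReal

/-!
The density `e^{⟨θ',g⟩} / Z` of `π_{θ'}` is at most `e^{2‖θ'‖}`, because `|⟨θ',g⟩| ≤ ‖θ'‖` bounds
the numerator by `e^{‖θ'‖}` and the normaliser `Z` from below by `e^{-‖θ'‖}`. Hence
`q · π_{θ'} ≤ π`, and `π̄` is the normalised remainder `(π - q · π_{θ'}) / (1 - q)`. The variance
bound also only uses `q · π_{θ'} ≤ π`: the variance under `π_{θ'}` is at most the second moment
about the mean of `π`, and this second moment can only grow when `q · π_{θ'}` is enlarged to `π`.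
-/

namespace MeasureTheory.Measure

variable {A : Type*} [MeasurableSpace A]

lemma le_one_of_smul_le {ν π : Measure A} [IsProbabilityMeasure ν] [IsProbabilityMeasure π]
    {c : ℝ≥0∞} (h : c • ν ≤ π) : c ≤ 1 := by
  simpa using h Set.univ

lemma exists_eq_smul_add_one_sub_smul_of_smul_le {ν π : Measure A} [IsProbabilityMeasure ν]
    [IsProbabilityMeasure π] {c : ℝ≥0∞} (h : c • ν ≤ π) :
    ∃ πbar : Measure A, IsProbabilityMeasure πbar ∧ π = c • ν + (1 - c) • πbar := by
  rcases (le_one_of_smul_le h).eq_or_lt with rfl | hc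
  · exact ⟨π, inferInstance, by simp [eq_of_le_of_isProbabilityMeasure (one_smul ℝ≥0∞ ν ▸ h)]⟩
  have hc' : 1 - c ≠ 0 := (tsub_pos_of_lt hc).ne'
  have : IsFiniteMeasure (c • ν) := isFiniteMeasure_of_le π h
  refine ⟨(1 - c)⁻¹ • (π - c • ν), ⟨?_⟩, ?_⟩
  · rw [smul_apply, sub_apply MeasurableSet.univ h]
    simp [ENNReal.inv_mul_cancel hc' (by simp)]
  · rw [smul_smul, ENNReal.mul_inv_cancel hc' (by simp), one_smul, add_comm,
      sub_add_cancel_of_le h]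

lemma smul_withDensity_ofReal_le_withDensity_ofReal {μ : Measure A} {c : ℝ} {h f : A → ℝ}
    (hc : 0 ≤ c) (hle : ∀ a, c * h a ≤ f a) :
    ENNReal.ofReal c • μ.withDensity (fun a => ENNReal.ofReal (h a))
      ≤ μ.withDensity (fun a => ENNReal.ofReal (f a)) := by
  rw [← withDensity_smul' _ _ ENNReal.ofReal_ne_top]
  refine withDensity_mono (Filter.Eventually.of_forall fun a => ?_)
  simpa [← ENNReal.ofReal_mul hc] using ENNReal.ofReal_le_ofReal (hle a)

end MeasureTheory.Measure

namespace ProbabilityTheory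

variable {A : Type*} [MeasurableSpace A]

lemma variance_le_integral_sub_sq {ν : Measure A} [IsProbabilityMeasure ν] {X : A → ℝ}
    (hX : AEStronglyMeasurable X ν) (m : ℝ) : variance X ν ≤ ∫ a, (X a - m) ^ 2 ∂ν := by
  rw [← variance_sub_const hX m]
  exact variance_le_expectation_sq (hX.sub aestronglyMeasurable_const)

lemma toReal_mul_variance_le_of_smul_le {ν π : Measure A} [IsProbabilityMeasure ν]
    [IsFiniteMeasure π]
    {X : A → ℝ} (hXν : AEStronglyMeasurable X ν) (hXπ : MemLp X 2 π) {c : ℝ≥0∞}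
    (h : c • ν ≤ π) : c.toReal * variance X ν ≤ variance X π := by
  set m := π[X]
  calc c.toReal * variance X ν ≤ c.toReal * ∫ a, (X a - m) ^ 2 ∂ν := by
        gcongr; exact variance_le_integral_sub_sq hXν m
    _ = ∫ a, (X a - m) ^ 2 ∂(c • ν) := by rw [integral_smul_measure, smul_eq_mul]
    _ ≤ ∫ a, (X a - m) ^ 2 ∂π :=
        integral_mono_measure h (Filter.Eventually.of_forall fun a => sq_nonneg _)
          (hXπ.sub (memLp_const m)).integrable_sq
    _ = variance X π := (variance_eq_integral hXπ.aemeasurable).symm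

end ProbabilityTheory

namespace MeasureTheory

variable {A : Type*} [MeasurableSpace A] {μ : Measure A} [IsProbabilityMeasure μ]
  {φ : A → ℝ} {M : ℝ}

lemma integrable_exp_of_abs_le (hφ : AEStronglyMeasurable φ μ) (hM : ∀ a, |φ a| ≤ M) :
    Integrable (fun a => Real.exp (φ a)) μ :=
  Integrable.of_bound (Real.continuous_exp.comp_aestronglyMeasurable hφ) (Real.exp M) (Filter.Eventually.of_forall fun a => by
    simpa using (le_abs_self _).trans (hM a))

lemma exp_div_integral_exp_le_exp_two_mul (hφ : AEStronglyMeasurable φ μ)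
    (hM : ∀ a, |φ a| ≤ M) (a : A) :
    Real.exp (φ a) / ∫ b, Real.exp (φ b) ∂μ ≤ Real.exp (2 * M) := by
  have hZ : Real.exp (-M) ≤ ∫ b, Real.exp (φ b) ∂μ := by
    simpa using integral_mono (integrable_const _) (integrable_exp_of_abs_le hφ hM)
      fun b => Real.exp_le_exp.2 (neg_le_of_abs_le (hM b))
  calc Real.exp (φ a) / ∫ b, Real.exp (φ b) ∂μ ≤ Real.exp M / Real.exp (-M) :=
        div_le_div₀ (Real.exp_pos _).le (Real.exp_le_exp.2 ((le_abs_self _).trans (hM a)))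
          (Real.exp_pos _) hZ
    _ = Real.exp (2 * M) := by rw [← Real.exp_sub]; ring_nf

end MeasureTheory

theorem density_lower_bound_mixture_general {A : Type*} [MeasurableSpace A] {p : ℕ}
    (μ : Measure A) [IsProbabilityMeasure μ]
    (g : A → EuclideanSpace ℝ (Fin p)) (hgm : Measurable g) (hgb : ∀ a, ‖g a‖ ≤ 1)
    (θ' : EuclideanSpace ℝ (Fin p)) (πθ' : Measure A)
    (hπθ' : πθ' = μ.withDensity fun a =>
        ENNReal.ofReal (Real.exp ⟪θ', g a⟫ / ∫ b, Real.exp ⟪θ', g b⟫ ∂μ))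
    (R : ℝ) (f : A → ℝ)
    (π : Measure A) [IsProbabilityMeasure π]
    (hπ : π = μ.withDensity fun a => ENNReal.ofReal (f a))
    (hfl : ∀ a, Real.exp (-R) ≤ f a) :
    0 < Real.exp (-R - 2 * ‖θ'‖) ∧ Real.exp (-R - 2 * ‖θ'‖) ≤ 1 ∧
      ∃ πbar : Measure A, IsProbabilityMeasure πbar ∧
        π = ENNReal.ofReal (Real.exp (-R - 2 * ‖θ'‖)) • πθ'
            + ENNReal.ofReal (1 - Real.exp (-R - 2 * ‖θ'‖)) • πbar ∧
        ∀ v : EuclideanSpace ℝ (Fin p), ‖v‖ = 1 →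
          Real.exp (-R - 2 * ‖θ'‖) * variance (fun a => ⟪v, g a⟫) πθ'
            ≤ variance (fun a => ⟪v, g a⟫) π := by
  set q := Real.exp (-R - 2 * ‖θ'‖)
  have hinner (w : EuclideanSpace ℝ (Fin p)) (a : A) : |⟪w, g a⟫| ≤ ‖w‖ :=
    (abs_real_inner_le_norm w (g a)).trans (mul_le_of_le_one_right (norm_nonneg w) (hgb a))
  have hmeas (w : EuclideanSpace ℝ (Fin p)) : Measurable fun a => ⟪w, g a⟫ :=
    measurable_const.inner hgm
  -- `πθ'` is `μ.tilted fun a => ⟪θ', g a⟫` unfolded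
  have : IsProbabilityMeasure πθ' := hπθ' ▸ isProbabilityMeasure_tilted
    (integrable_exp_of_abs_le (hmeas θ').aestronglyMeasurable (hinner θ'))
  have hdom : ENNReal.ofReal q • πθ' ≤ π := by
    rw [hπθ', hπ]
    refine Measure.smul_withDensity_ofReal_le_withDensity_ofReal (Real.exp_pos _).le fun a => ?_
    calc q * (Real.exp ⟪θ', g a⟫ / ∫ b, Real.exp ⟪θ', g b⟫ ∂μ)
        ≤ q * Real.exp (2 * ‖θ'‖) := by
          gcongr
          exact exp_div_integral_exp_le_exp_two_mul (hmeas θ').aestronglyMeasurable (hinner θ') a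
      _ = Real.exp (-R) := by rw [← Real.exp_add]; ring_nf
      _ ≤ f a := hfl a
  obtain ⟨πbar, hπbar, hmix⟩ := Measure.exists_eq_smul_add_one_sub_smul_of_smul_le hdom
  refine ⟨Real.exp_pos _, ENNReal.ofReal_le_one.1 (Measure.le_one_of_smul_le hdom), πbar, hπbar,
    by rwa [ENNReal.ofReal_sub _ (Real.exp_pos _).le, ENNReal.ofReal_one], fun v hv => ?_⟩
  have hbound : ∀ a, ‖⟪v, g a⟫‖ ≤ 1 := fun a => hv ▸ hinner v a
  have hvar := toReal_mul_variance_le_of_smul_le (hmeas v).aestronglyMeasurable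
    (MemLp.of_bound (hmeas v).aestronglyMeasurable 1 (Filter.Eventually.of_forall hbound)) hdom
  rwa [ENNReal.toReal_ofReal (Real.exp_pos _).le] at hvar

/-- If `π = f·μ` with `f ≥ e^{−R}` and `π_{θ'} ∝ e^{⟨θ',g⟩} μ` with `‖g‖ ≤ 1`, then `π`
is a mixture `π = q·π_{θ'} + (1−q)·π̄` with `q = e^{−R−2‖θ'‖} ∈ (0,1]`, and for every unit
vector `v`, `Var_π(⟨v,g⟩) ≥ q·Var_{π_{θ'}}(⟨v,g⟩)`. -/
theorem density_lower_bound_mixture {A : Type*} [MeasurableSpace A] {p : ℕ}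
    (μ : Measure A) [IsProbabilityMeasure μ]
    (g : A → EuclideanSpace ℝ (Fin p)) (hgm : Measurable g) (hgb : ∀ a, ‖g a‖ ≤ 1)
    (θ' : EuclideanSpace ℝ (Fin p)) (πθ' : Measure A)
    (hπθ' : πθ' = μ.withDensity fun a =>
        ENNReal.ofReal (Real.exp ⟪θ', g a⟫ / ∫ b, Real.exp ⟪θ', g b⟫ ∂μ))
    (R : ℝ) (hR : 0 < R) (f : A → ℝ) (hfm : Measurable f)
    (π : Measure A) [IsProbabilityMeasure π]
    (hπ : π = μ.withDensity fun a => ENNReal.ofReal (f a))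
    (hfl : ∀ a, Real.exp (-R) ≤ f a) :
    0 < Real.exp (-R - 2 * ‖θ'‖) ∧ Real.exp (-R - 2 * ‖θ'‖) ≤ 1 ∧
      ∃ πbar : Measure A, IsProbabilityMeasure πbar ∧
        π = ENNReal.ofReal (Real.exp (-R - 2 * ‖θ'‖)) • πθ'
            + ENNReal.ofReal (1 - Real.exp (-R - 2 * ‖θ'‖)) • πbar ∧
        ∀ v : EuclideanSpace ℝ (Fin p), ‖v‖ = 1 →
          Real.exp (-R - 2 * ‖θ'‖) * variance (fun a => ⟪v, g a⟫) πθ'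
            ≤ variance (fun a => ⟪v, g a⟫) π :=
  density_lower_bound_mixture_general μ g hgm hgb θ' πθ' hπθ' R f π hπ hfl
end

section
/- With f and Z_β as in the hat-function example (f piecewise linear equal to 6a−1 on [0,1/3], 1 on [1/3,2/3], 5−6a on [2/3,1]; Z_β = ∫₀¹ e^{βf}), define the Gibbs measure π_β with density e^{βf}/Z_β with respect to Lebesgue measure on [0,1]. Then KL(π_β | μ) = β·(N_β/Z_β) − log Z_β where N_β = ∫₀¹ f·e^{βf} da = (e^β/3)·(1 + 1/β − 1/β² + e^{−2β}(1/β + 1/β²)), and lim_{β→∞} KL(π_β | μ) = log 3. -/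
open MeasureTheory Filter

/-- The piecewise-linear hat-function combination `f_θ` for `θ = (−1,1,1,−1)` on the grid
`{0, 1/3, 2/3, 1}`. -/
noncomputable def hatf (a : ℝ) : ℝ :=
  if a ≤ 1 / 3 then 6 * a - 1 else if a ≤ 2 / 3 then 1 else 5 - 6 * a

/-- Normalizing constant `Z_β = ∫₀¹ e^{β f}`. -/
noncomputable def Zhat (β : ℝ) : ℝ := ∫ a in (0 : ℝ)..1, Real.exp (β * hatf a)

/-- Numerator `N_β = ∫₀¹ f e^{β f}`. -/
noncomputable def Nhat (β : ℝ) : ℝ := ∫ a in (0 : ℝ)..1, hatf a * Real.exp (β * hatf a)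

/-- KL divergence of the Gibbs measure `π_β` (density `e^{βf}/Z_β`) from Lebesgue
measure on `[0,1]`. -/
noncomputable def KLhat (β : ℝ) : ℝ :=
  ∫ a in (0 : ℝ)..1,
    Real.exp (β * hatf a) / Zhat β * Real.log (Real.exp (β * hatf a) / Zhat β)

/-!
On `[0, 1/3]` and `[2/3, 1]` the hat function is affine with slope `±6` onto `[-1, 1]`, and on
`[1/3, 2/3]` it equals its maximum `1`; so `∫₀¹ F ∘ f = (∫₋₁¹ F)/3 + F 1/3`, which makes `Z_β` and
`N_β` elementary. Since the log-density of `π_β` is `βf − log Z_β`, the KL divergence is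
`β N_β/Z_β − log Z_β = log 3 + O(1/β)`: the factor `e^β/3` of `Z_β` is the mass `1/3` of the
plateau `[1/3, 2/3] = Argmax f` times `e^{β max f}`.
-/

open Real Set intervalIntegral

@[fun_prop]
theorem continuous_hatf : Continuous hatf := by
  refine Continuous.if_le (by fun_prop) (Continuous.if_le ?_ ?_ ?_ ?_ ?_) ?_ ?_ ?_ <;>
    first | fun_prop | intro a ha; norm_num [ha]

theorem hatf_of_le {a : ℝ} (ha : a ≤ 1 / 3) : hatf a = 6 * a - 1 := if_pos ha

theorem hatf_eq_one_of_mem_Icc {a : ℝ} (ha : a ∈ Icc (1 / 3 : ℝ) (2 / 3)) : hatf a = 1 := by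
  rcases ha.1.eq_or_lt with rfl | hlt
  · norm_num [hatf]
  · rw [hatf, if_neg hlt.not_ge, if_pos ha.2]

theorem hatf_of_ge {a : ℝ} (ha : 2 / 3 ≤ a) : hatf a = 5 - 6 * a := by
  rcases ha.eq_or_lt with rfl | hlt
  · norm_num [hatf]
  · rw [hatf, if_neg (by linarith), if_neg hlt.not_ge]

theorem integral_comp_hatf {F : ℝ → ℝ} (hF : Continuous F) :
    ∫ a in (0 : ℝ)..1, F (hatf a) = (∫ y in (-1 : ℝ)..1, F y) / 3 + F 1 / 3 := by
  have hint (p q : ℝ) : IntervalIntegrable (fun a => F (hatf a)) volume p q :=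
    (hF.comp continuous_hatf).intervalIntegrable p q
  have left : ∫ a in (0 : ℝ)..(1 / 3), F (hatf a) = ∫ a in (0 : ℝ)..(1 / 3), F (6 * a - 1) :=
    integral_congr fun a ha => by
      rw [uIcc_of_le (by norm_num)] at ha
      rw [hatf_of_le ha.2]
  have middle : ∫ a in (1 / 3 : ℝ)..(2 / 3), F (hatf a) = ∫ _ in (1 / 3 : ℝ)..(2 / 3), F 1 :=
    integral_congr fun a ha => by
      rw [uIcc_of_le (by norm_num)] at ha
      rw [hatf_eq_one_of_mem_Icc ha]
  have right : ∫ a in (2 / 3 : ℝ)..1, F (hatf a) = ∫ a in (2 / 3 : ℝ)..1, F (5 - 6 * a) :=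
    integral_congr fun a ha => by
      rw [uIcc_of_le (by norm_num)] at ha
      rw [hatf_of_ge ha.1]
  rw [← integral_add_adjacent_intervals (hint 0 (2 / 3)) (hint (2 / 3) 1),
    ← integral_add_adjacent_intervals (hint 0 (1 / 3)) (hint (1 / 3) (2 / 3)),
    left, middle, right, integral_comp_mul_sub F (by norm_num : (6 : ℝ) ≠ 0) 1,
    intervalIntegral.integral_const, integral_comp_sub_mul F (by norm_num : (6 : ℝ) ≠ 0) 5]
  norm_num
  ring

theorem integral_exp_mul {β : ℝ} (hβ : β ≠ 0) (a b : ℝ) :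
    ∫ y in a..b, exp (β * y) = (exp (β * b) - exp (β * a)) / β := by
  rw [integral_comp_mul_left _ hβ, integral_exp, smul_eq_mul, inv_mul_eq_div]

theorem integral_mul_exp_mul {β : ℝ} (hβ : β ≠ 0) (a b : ℝ) :
    ∫ y in a..b, y * exp (β * y) =
      (b / β - 1 / β ^ 2) * exp (β * b) - (a / β - 1 / β ^ 2) * exp (β * a) := by
  have hderiv (y : ℝ) : HasDerivAt (fun y => (y / β - 1 / β ^ 2) * exp (β * y))
      (y * exp (β * y)) y := by
    refine ((((hasDerivAt_id' y).div_const β).sub_const (1 / β ^ 2)).mul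
      ((hasDerivAt_id' y).const_mul β).exp).congr_deriv ?_
    field_simp
    ring
  exact integral_eq_sub_of_hasDerivAt (fun y _ => hderiv y)
    (Continuous.intervalIntegrable (by fun_prop) a b)

theorem Zhat_eq {β : ℝ} (hβ : β ≠ 0) :
    Zhat β = exp β / 3 * (1 + 1 / β - exp (-2 * β) * (1 / β)) := by
  rw [Zhat, integral_comp_hatf (F := fun y => exp (β * y)) (by fun_prop),
    integral_exp_mul hβ,
    mul_one, mul_neg_one, show -2 * β = -β + -β by ring, exp_add, exp_neg]
  field_simp
  ring

theorem Nhat_eq {β : ℝ} (hβ : β ≠ 0) :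
    Nhat β = exp β / 3 * (1 + 1 / β - 1 / β ^ 2 + exp (-2 * β) * (1 / β + 1 / β ^ 2)) := by
  rw [Nhat, integral_comp_hatf (F := fun y => y * exp (β * y)) (by fun_prop),
    integral_mul_exp_mul hβ,
    mul_one, mul_neg_one, show -2 * β = -β + -β by ring, exp_add, exp_neg]
  field_simp
  ring

theorem integral_gibbs_mul_log {f : ℝ → ℝ} {β a b : ℝ}
    (hfexp : IntervalIntegrable (fun x => f x * exp (β * f x)) volume a b)
    (hZ : ∫ x in a..b, exp (β * f x) ≠ 0) :
    ∫ x in a..b, exp (β * f x) / (∫ y in a..b, exp (β * f y)) *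
        log (exp (β * f x) / ∫ y in a..b, exp (β * f y)) =
      β * ((∫ x in a..b, f x * exp (β * f x)) / ∫ x in a..b, exp (β * f x)) -
        log (∫ x in a..b, exp (β * f x)) := by
  set Z := ∫ x in a..b, exp (β * f x) with hZdef
  have hexp : IntervalIntegrable (fun x => exp (β * f x)) volume a b :=
    intervalIntegrable_of_integral_ne_zero hZ
  have hpointwise (x : ℝ) : exp (β * f x) / Z * log (exp (β * f x) / Z) =
      β / Z * (f x * exp (β * f x)) - log Z / Z * exp (β * f x) := by
    rw [log_div (exp_ne_zero _) hZ, log_exp]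
    ring
  simp only [hpointwise]
  rw [integral_sub (hfexp.const_mul _) (hexp.const_mul _), intervalIntegral.integral_const_mul,
    intervalIntegral.integral_const_mul, ← hZdef]
  field_simp

theorem Zhat_pos (β : ℝ) : 0 < Zhat β :=
  intervalIntegral_pos_of_pos (Continuous.intervalIntegrable (by fun_prop) _ _)
    (fun _ => exp_pos _) zero_lt_one

theorem KLhat_eq (β : ℝ) : KLhat β = β * (Nhat β / Zhat β) - log (Zhat β) :=
  integral_gibbs_mul_log (Continuous.intervalIntegrable (by fun_prop) _ _) (Zhat_pos β).ne'

theorem KLhat_eq_log_three_add {β : ℝ} (hβ : β ≠ 0) :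
    KLhat β = log 3 + (-(1 / β) + exp (-2 * β) * (2 + 1 / β)) /
      (1 + 1 / β - exp (-2 * β) * (1 / β)) - log (1 + 1 / β - exp (-2 * β) * (1 / β)) := by
  have hZ := Zhat_pos β
  rw [KLhat_eq, Nhat_eq hβ]
  rw [Zhat_eq hβ] at hZ ⊢
  generalize exp (-2 * β) = u at hZ ⊢
  have hw : 1 + 1 / β - u * (1 / β) ≠ 0 := right_ne_zero_of_mul hZ.ne'
  have hmean : β * ((1 + 1 / β - 1 / β ^ 2 + u * (1 / β + 1 / β ^ 2)) /
      (1 + 1 / β - u * (1 / β))) =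
      β + (-(1 / β) + u * (2 + 1 / β)) / (1 + 1 / β - u * (1 / β)) := by
    rw [mul_div_assoc', add_div' _ _ _ hw, div_left_inj' hw]
    field_simp
    ring
  rw [mul_div_mul_left _ _ (by positivity), hmean, log_mul (by positivity) hw,
    log_div (exp_ne_zero β) three_ne_zero, log_exp]
  ring

theorem tendsto_KLhat : Tendsto KLhat atTop (nhds (log 3)) := by
  have hinv : Tendsto (fun β : ℝ => 1 / β) atTop (nhds 0) := by
    simpa using tendsto_inv_atTop_zero
  have hexp : Tendsto (fun β : ℝ => exp (-2 * β)) atTop (nhds 0) :=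
    tendsto_exp_atBot.comp (tendsto_id.const_mul_atTop_of_neg (by norm_num))
  have hden : Tendsto (fun β : ℝ => 1 + 1 / β - exp (-2 * β) * (1 / β)) atTop (nhds 1) := by
    simpa using (tendsto_const_nhds.add hinv).sub (hexp.mul hinv)
  have hnum : Tendsto (fun β : ℝ => -(1 / β) + exp (-2 * β) * (2 + 1 / β)) atTop (nhds 0) := by
    simpa using hinv.neg.add (hexp.mul (tendsto_const_nhds.add hinv))
  have hlim := (tendsto_const_nhds (x := log 3)).add (hnum.div hden one_ne_zero) |>.sub
    (hden.log one_ne_zero)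
  rw [zero_div, add_zero, log_one, sub_zero] at hlim
  exact hlim.congr' <| (eventually_ne_atTop 0).mono fun β hβ => (KLhat_eq_log_three_add hβ).symm

/-- In the hat-function example the KL divergence equals `β N_β/Z_β − log Z_β`, with
`N_β = (e^β/3)(1 + 1/β − 1/β² + e^{−2β}(1/β + 1/β²))`, and it converges to `log 3`
as `β → ∞` (so the KL divergence is not radially unbounded). -/
theorem hat_kl_limit :
    (∀ β : ℝ, 0 < β →
        KLhat β = β * (Nhat β / Zhat β) - Real.log (Zhat β) ∧
        Nhat β = Real.exp β / 3 *
          (1 + 1 / β - 1 / β ^ 2 + Real.exp (-2 * β) * (1 / β + 1 / β ^ 2))) ∧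
      Tendsto KLhat atTop (nhds (Real.log 3)) :=
  ⟨fun β hβ => ⟨KLhat_eq β, Nhat_eq hβ.ne'⟩, tendsto_KLhat⟩
end
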